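/- arXiv:1701.01363 — 5 statements merged into one kernel-verified Lean document; each statement's English description precedes it below -/
import Mathlib

section
/- For every complex numbers z, w, one has |Im((z Log|z|² − w Log|w|²)(z̄ − w̄))| ≤ 4|z − w|², where z Log|z|² is interpreted as 0 when z = 0. -/
/-- `z Log |z|²`, interpreted as `0` when `z = 0`. -/
noncomputable def zLog (z : ℂ) : ℂ :=
  if z = 0 then 0 else z * (Real.log (‖z‖ ^ 2) : ℂ)

/-- For every complex numbers `z, w`,
`|Im((z Log|z|² − w Log|w|²)(conj z − conj w))| ≤ 4 |z − w|²`. -/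
theorem im_zLog_mul_sub_conj_le (z w : ℂ) :
    |((zLog z - zLog w) * (starRingEnd ℂ z - starRingEnd ℂ w)).im| ≤ 4 * ‖z - w‖ ^ 2 := by
  wlog hle : ‖w‖ ≤ ‖z‖ with H
  · have h := H w z (le_of_not_ge hle)
    have e : (zLog w - zLog z) * (starRingEnd ℂ w - starRingEnd ℂ z)
        = (zLog z - zLog w) * (starRingEnd ℂ z - starRingEnd ℂ w) := by ring
    rw [e, norm_sub_rev w z] at h
    exact h
  rcases eq_or_ne w 0 with rfl | hw
  · rcases eq_or_ne z 0 with rfl | hz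
    · simp [zLog]
    · have e : (zLog z - zLog 0) * (starRingEnd ℂ z - starRingEnd ℂ 0)
          = (Real.log (‖z‖ ^ 2) : ℂ) * ((Complex.normSq z : ℝ) : ℂ) := by
        rw [zLog, zLog, if_neg hz, if_pos rfl, map_zero, sub_zero, sub_zero,
          mul_comm z, mul_assoc, Complex.mul_conj]
      rw [e]
      simp only [← Complex.ofReal_mul, Complex.ofReal_im, abs_zero]
      positivity
  have hz : z ≠ 0 := by
    intro h; apply hw
    rw [← norm_eq_zero]
    have := hle
    rw [h, norm_zero] at this
    exact le_antisymm this (norm_nonneg w)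
  have him : ((zLog z - zLog w) * (starRingEnd ℂ z - starRingEnd ℂ w)).im
      = (Real.log (‖w‖ ^ 2) - Real.log (‖z‖ ^ 2)) * (z * starRingEnd ℂ w).im := by
    rw [zLog, if_neg hz, zLog, if_neg hw]
    simp only [Complex.sub_im, Complex.mul_im, Complex.sub_re, Complex.mul_re,
      Complex.conj_re, Complex.conj_im, Complex.ofReal_re, Complex.ofReal_im]
    ring
  set a := Real.log (‖z‖ ^ 2) with ha
  set b := Real.log (‖w‖ ^ 2) with hb
  rw [him, abs_mul]
  have hs : (0:ℝ) < ‖w‖ := norm_pos_iff.mpr hw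
  have hr : (0:ℝ) < ‖z‖ := norm_pos_iff.mpr hz
  have hIm : |(z * starRingEnd ℂ w).im| ≤ ‖z - w‖ * ‖w‖ := by
    have e : (z * starRingEnd ℂ w).im = ((z - w) * starRingEnd ℂ w).im := by
      rw [sub_mul, Complex.sub_im, Complex.mul_conj]
      simp
    rw [e]
    calc |((z - w) * starRingEnd ℂ w).im| ≤ ‖(z - w) * starRingEnd ℂ w‖ :=
          Complex.abs_im_le_norm _
      _ = ‖z - w‖ * ‖w‖ := by rw [norm_mul, RCLike.norm_conj]
  have hlog : |b - a| * ‖w‖ ≤ 2 * ‖z - w‖ := by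
    have hba : b ≤ a := by
      rw [ha, hb]
      exact Real.log_le_log (by positivity) (by nlinarith)
    rw [abs_sub_comm, abs_of_nonneg (sub_nonneg.mpr hba)]
    have h1 : a - b = 2 * Real.log (‖z‖ / ‖w‖) := by
      rw [ha, hb, Real.log_div hr.ne' hs.ne', Real.log_pow, Real.log_pow]
      push_cast; ring
    have h2 : Real.log (‖z‖ / ‖w‖) ≤ ‖z‖ / ‖w‖ - 1 :=
      Real.log_le_sub_one_of_pos (by positivity)
    have h3 : ‖z‖ - ‖w‖ ≤ ‖z - w‖ := norm_sub_norm_le z w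
    rw [h1]
    have : (‖z‖ / ‖w‖ - 1) * ‖w‖ = ‖z‖ - ‖w‖ := by
      rw [sub_mul, one_mul, div_mul_cancel₀ _ hs.ne']
    nlinarith [mul_le_mul_of_nonneg_right h2 hs.le]
  have hD : (0:ℝ) ≤ ‖z - w‖ := norm_nonneg _
  nlinarith [abs_nonneg (b - a), abs_nonneg (z * starRingEnd ℂ w).im,
    mul_le_mul hlog hIm (abs_nonneg _) (by positivity),
    mul_le_mul_of_nonneg_left hIm (abs_nonneg (b - a))]
end

section
/- Let A be as in the definition below and B(s) = s² Log(s²) + A(s) for s ≥ 0. Then for every ε > 0 there exists C_ε > 0 such that for all z, w ∈ ℂ, |B(|z|) − B(|w|)| ≤ C_ε (|z|^{1+ε} + |w|^{1+ε}) |z − w|. -/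
/-- The function `A` from (2.2). -/
noncomputable def Afun (t : ℝ) : ℝ :=
  if t ≤ Real.exp (-3) then -(t ^ 2) * Real.log (t ^ 2)
  else 3 * t ^ 2 + 4 * Real.exp (-3) * t - Real.exp (-6)

/-- `B(s) = s² Log(s²) + A(s)` (with `B 0 = 0` since `Real.log 0 = 0`). -/
noncomputable def Bfun (t : ℝ) : ℝ := t ^ 2 * Real.log (t ^ 2) + Afun t

lemma Bfun_zero {t : ℝ} (ht : t ≤ Real.exp (-3)) : Bfun t = 0 := by
  simp only [Bfun, Afun, if_pos ht]; ring

lemma Bfun_eq {t : ℝ} (ht : Real.exp (-3) ≤ t) :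
    Bfun t = t ^ 2 * Real.log (t ^ 2) + (3 * t ^ 2 + 4 * Real.exp (-3) * t - Real.exp (-6)) := by
  rcases eq_or_lt_of_le ht with h | h
  · subst h
    have h2 : Real.exp (-3) ^ 2 = Real.exp (-6) := by
      rw [pow_two, ← Real.exp_add]; norm_num
    rw [Bfun_zero le_rfl, h2, Real.log_exp]
    linarith [h2, pow_two (Real.exp (-3))]
  · simp only [Bfun, Afun, if_neg (not_le.mpr h)]

lemma log_sq_bound {ε a : ℝ} (hε : 0 < ε) (ha : Real.exp (-3) ≤ a) :
    |Real.log (a ^ 2)| ≤ 6 + (2/ε) * a ^ ε := by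
  have ha0 : 0 < a := lt_of_lt_of_le (Real.exp_pos _) ha
  have hlog : Real.log (a ^ 2) = 2 * Real.log a := by
    rw [sq, Real.log_mul ha0.ne' ha0.ne']; ring
  have hla : -3 ≤ Real.log a := by
    calc -3 = Real.log (Real.exp (-3)) := (Real.log_exp _).symm
    _ ≤ Real.log a := Real.log_le_log (Real.exp_pos _) ha
  have hr : 0 ≤ a ^ ε := Real.rpow_nonneg ha0.le ε
  rcases le_total a 1 with h1 | h1
  · have hl0 : Real.log a ≤ 0 := Real.log_nonpos ha0.le h1
    rw [hlog, abs_of_nonpos (by linarith)]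
    have : 0 ≤ (2/ε) * a ^ ε := by positivity
    linarith
  · have hl0 : 0 ≤ Real.log a := Real.log_nonneg h1
    have hkey : ε * Real.log a ≤ a ^ ε := by
      have h := Real.log_rpow ha0 ε
      have h2 : Real.log (a ^ ε) ≤ a ^ ε - 1 := Real.log_le_sub_one_of_pos (Real.rpow_pos_of_pos ha0 ε)
      rw [h] at h2; linarith
    have h3 : Real.log a ≤ a ^ ε / ε := (le_div_iff₀ hε).mpr (by linarith)
    have h4 : (2/ε) * a ^ ε = 2 * (a ^ ε / ε) := by ring
    rw [hlog, abs_of_nonneg (by linarith)]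
    linarith

lemma core_est {ε : ℝ} (hε : 0 < ε) {a b : ℝ} (hb : Real.exp (-3) ≤ b) (hab : b ≤ a) :
    |Bfun a - Bfun b| ≤ (24 * Real.exp (3*ε) + 4/ε) * a ^ (1+ε) * (a - b) := by
  have hE : (0:ℝ) < Real.exp (-3) := Real.exp_pos _
  have hb0 : 0 < b := lt_of_lt_of_le hE hb
  have ha0 : 0 < a := lt_of_lt_of_le hb0 hab
  have ha : Real.exp (-3) ≤ a := le_trans hb hab
  have habnn : 0 ≤ a - b := sub_nonneg.mpr hab
  set L := Real.log (a ^ 2) with hLdef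
  set M := Real.log (b ^ 2) with hMdef
  have hdiff : Bfun a - Bfun b
      = ((a^2 - b^2) * L + b^2 * (L - M)) + (3*(a^2 - b^2) + 4*Real.exp (-3)*(a - b)) := by
    rw [Bfun_eq ha, Bfun_eq hb]; ring
  have hML : M ≤ L := Real.log_le_log (by positivity) (by nlinarith)
  have hLM2 : b^2 * (L - M) ≤ a^2 - b^2 := by
    have h1 : L - M = Real.log (a^2 / b^2) := by
      rw [Real.log_div (by positivity) (by positivity)]
    have h2 : Real.log (a^2 / b^2) ≤ a^2/b^2 - 1 :=
      Real.log_le_sub_one_of_pos (by positivity)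
    have h3 : b^2 * (a^2/b^2 - 1) = a^2 - b^2 := by field_simp
    nlinarith [sq_nonneg b]
  have hL : |L| ≤ 6 + (2/ε) * a ^ ε := log_sq_bound hε ha
  have hLnn : 0 ≤ |L| := abs_nonneg _
  have hab2 : a^2 - b^2 ≤ 2*a*(a - b) := by nlinarith
  have habs : |Bfun a - Bfun b|
      ≤ (a^2 - b^2) * |L| + b^2 * (L - M) + 3*(a^2 - b^2) + 4*Real.exp (-3)*(a - b) := by
    rw [hdiff]
    have t1 : |(a^2 - b^2) * L| = (a^2 - b^2) * |L| := by
      rw [abs_mul, abs_of_nonneg (by nlinarith : (0:ℝ) ≤ a^2 - b^2)]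
    have t2 : |b^2 * (L - M)| = b^2 * (L - M) := by
      rw [abs_mul, abs_of_nonneg (by positivity : (0:ℝ) ≤ b^2),
        abs_of_nonneg (by linarith : (0:ℝ) ≤ L - M)]
    have t3 := abs_add_le ((a^2 - b^2) * L + b^2 * (L - M))
      (3*(a^2 - b^2) + 4*Real.exp (-3)*(a - b))
    have t4 := abs_add_le ((a^2 - b^2) * L) (b^2 * (L - M))
    have t5 : |3*(a^2 - b^2) + 4*Real.exp (-3)*(a - b)|
        = 3*(a^2 - b^2) + 4*Real.exp (-3)*(a - b) :=
      abs_of_nonneg (by nlinarith)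
    rw [t1, t2] at t4
    rw [t5] at t3
    linarith
  -- rpow facts
  have hP0 : 0 < a ^ ε := Real.rpow_pos_of_pos ha0 ε
  have haP : a ^ (1+ε) = a * a ^ ε := by
    rw [Real.rpow_add ha0, Real.rpow_one]
  have hPexp : Real.exp (-(3*ε)) ≤ a ^ ε := by
    calc Real.exp (-(3*ε)) = Real.exp (-3) ^ ε := by
          rw [← Real.exp_mul]; ring_nf
      _ ≤ a ^ ε := Real.rpow_le_rpow hE.le ha hε.le
  have hexp1 : Real.exp (3*ε) * Real.exp (-(3*ε)) = 1 := by
    rw [← Real.exp_add]; simp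
  have hexp0 : 0 < Real.exp (3*ε) := Real.exp_pos _
  have ha_le : a ≤ Real.exp (3*ε) * a ^ (1+ε) := by
    rw [haP]
    have h7 : Real.exp (3*ε) * Real.exp (-(3*ε)) * a ≤ Real.exp (3*ε) * a ^ ε * a := by
      have := mul_le_mul_of_nonneg_left hPexp hexp0.le
      nlinarith
    calc a = Real.exp (3*ε) * Real.exp (-(3*ε)) * a := by rw [hexp1]; ring
      _ ≤ Real.exp (3*ε) * a ^ ε * a := h7
      _ = Real.exp (3*ε) * (a * a ^ ε) := by ring
  -- combine
  have h1 : (a^2 - b^2) * |L| ≤ 2*a*(a-b) * (6 + (2/ε) * a ^ ε) :=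
    mul_le_mul hab2 hL hLnn (by nlinarith)
  have h1' : 2*a*(a-b) * (6 + (2/ε) * a ^ ε) = (a-b) * (12*a + (4/ε) * a ^ (1+ε)) := by
    rw [haP]; ring
  have h4 : 4*Real.exp (-3)*(a - b) ≤ 4*a*(a-b) := by
    have := mul_le_mul_of_nonneg_right ha habnn
    linarith
  have h6 := mul_le_mul_of_nonneg_left ha_le habnn
  have hfin : (a^2 - b^2) * |L| + b^2 * (L - M) + 3*(a^2 - b^2) + 4*Real.exp (-3)*(a - b)
      ≤ (a - b) * (24 * a + (4/ε) * a ^ (1+ε)) := by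
    rw [h1'] at h1
    linarith [h1, hLM2, hab2, h4, sq_nonneg (a-b)]
  have hmono : (a - b) * (24 * a + (4/ε) * a ^ (1+ε))
      ≤ (24 * Real.exp (3*ε) + 4/ε) * a ^ (1+ε) * (a - b) := by
    linarith [h6]
  linarith

lemma main_est {ε : ℝ} (hε : 0 < ε) {a b : ℝ} (hb : 0 ≤ b) (hab : b ≤ a) :
    |Bfun a - Bfun b| ≤ (24 * Real.exp (3*ε) + 4/ε) * a ^ (1+ε) * (a - b) := by
  have hC : (0:ℝ) < 24 * Real.exp (3*ε) + 4/ε := by positivity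
  have ha : 0 ≤ a := le_trans hb hab
  rcases le_total a (Real.exp (-3)) with h | h
  · rw [Bfun_zero h, Bfun_zero (le_trans hab h)]
    simp only [sub_zero, abs_zero]
    have : 0 ≤ a ^ (1+ε) := Real.rpow_nonneg ha _
    have : 0 ≤ a - b := sub_nonneg.mpr hab
    positivity
  · rcases le_total b (Real.exp (-3)) with h2 | h2
    · have hkey := core_est hε (le_refl (Real.exp (-3))) h
      rw [Bfun_zero le_rfl] at hkey
      rw [Bfun_zero h2]
      have hnn : 0 ≤ (24 * Real.exp (3*ε) + 4/ε) * a ^ (1+ε) := by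
        have : 0 ≤ a ^ (1+ε) := Real.rpow_nonneg ha _
        positivity
      have : (24 * Real.exp (3*ε) + 4/ε) * a ^ (1+ε) * (a - Real.exp (-3))
          ≤ (24 * Real.exp (3*ε) + 4/ε) * a ^ (1+ε) * (a - b) :=
        mul_le_mul_of_nonneg_left (by linarith) hnn
      linarith
    · exact core_est hε h2 hab

lemma final_est {ε : ℝ} (hε : 0 < ε) {z w : ℂ} (h : ‖w‖ ≤ ‖z‖) :
    |Bfun ‖z‖ - Bfun ‖w‖|
      ≤ (24 * Real.exp (3*ε) + 4/ε) * (‖z‖ ^ (1+ε) + ‖w‖ ^ (1+ε)) * ‖z - w‖ := by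
  have h1 := main_est hε (norm_nonneg w) h
  have h2 : ‖z‖ - ‖w‖ ≤ ‖z - w‖ := norm_sub_norm_le z w
  have hC : (0:ℝ) < 24 * Real.exp (3*ε) + 4/ε := by positivity
  have hzr : 0 ≤ ‖z‖ ^ (1+ε) := Real.rpow_nonneg (norm_nonneg z) _
  have hwr : 0 ≤ ‖w‖ ^ (1+ε) := Real.rpow_nonneg (norm_nonneg w) _
  calc |Bfun ‖z‖ - Bfun ‖w‖|
      ≤ (24 * Real.exp (3*ε) + 4/ε) * ‖z‖ ^ (1+ε) * (‖z‖ - ‖w‖) := h1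
    _ ≤ (24 * Real.exp (3*ε) + 4/ε) * (‖z‖ ^ (1+ε) + ‖w‖ ^ (1+ε)) * ‖z - w‖ := by
        apply mul_le_mul
        · apply mul_le_mul_of_nonneg_left _ hC.le; linarith
        · exact h2
        · linarith
        · positivity

/-- For every `ε > 0` there exists `C_ε > 0` such that for all `z, w ∈ ℂ`,
`|B(|z|) − B(|w|)| ≤ C_ε (|z|^{1+ε} + |w|^{1+ε}) |z − w|`. -/
theorem Bfun_lipschitz_estimate :
    ∀ ε > (0 : ℝ), ∃ C > (0 : ℝ), ∀ z w : ℂ,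
      |Bfun ‖z‖ - Bfun ‖w‖| ≤ C * (‖z‖ ^ (1 + ε) + ‖w‖ ^ (1 + ε)) * ‖z - w‖ := by
  intro ε hε
  refine ⟨24 * Real.exp (3*ε) + 4/ε, by positivity, ?_⟩
  intro z w
  rcases le_total ‖w‖ ‖z‖ with h | h
  · exact final_est hε h
  · have := final_est hε h
    rw [abs_sub_comm, norm_sub_rev] at this
    calc |Bfun ‖z‖ - Bfun ‖w‖|
        ≤ (24 * Real.exp (3*ε) + 4/ε) * (‖w‖ ^ (1+ε) + ‖z‖ ^ (1+ε)) * ‖z - w‖ := this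
      _ = (24 * Real.exp (3*ε) + 4/ε) * (‖z‖ ^ (1+ε) + ‖w‖ ^ (1+ε)) * ‖z - w‖ := by ring
end

section
/- Let b(z) = (z/|z|²) B(|z|) for z ∈ ℂ \ {0} and b(0) = 0, where B(s) = s² Log(s²) + A(s). Then for every ε > 0 there exists C_ε > 0 such that |b(z) − b(w)| ≤ C_ε (|z|^ε + |w|^ε) |z − w| for all z, w ∈ ℂ. -/
/-- `b(z) = (z/|z|²) B(|z|)` for `z ≠ 0`, `b(0) = 0`. -/
noncomputable def bfun (z : ℂ) : ℂ :=
  if z = 0 then 0 else z / ((‖z‖ : ℂ) ^ 2) * (Bfun ‖z‖ : ℂ)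

/-- auxiliary: `φ(t) = B(t)/t²`, so that `b(z) = φ(‖z‖)·z`. -/
noncomputable def phiB (t : ℝ) : ℝ := Bfun t / t ^ 2

lemma exp_neg3_sq : Real.exp (-3) ^ 2 = Real.exp (-6) := by
  rw [sq, ← Real.exp_add]; norm_num

lemma phiB_zero_of_le {t : ℝ} (ht : t ≤ Real.exp (-3)) : phiB t = 0 := by
  have h : Bfun t = 0 := by
    unfold Bfun Afun; rw [if_pos ht]; ring
  simp [phiB, h]

lemma phiB_eq {t : ℝ} (ht : Real.exp (-3) ≤ t) :
    phiB t = Real.log (t ^ 2) + 3 + 4 * Real.exp (-3) / t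
      - Real.exp (-3) ^ 2 / t ^ 2 := by
  have ht0 : 0 < t := lt_of_lt_of_le (Real.exp_pos _) ht
  rcases eq_or_lt_of_le ht with h | h
  · rw [phiB_zero_of_le h.ge, ← h]
    have he : Real.exp (-3) ≠ 0 := (Real.exp_pos _).ne'
    have hl : Real.log (Real.exp (-3) ^ 2) = -6 := by
      rw [Real.log_pow, Real.log_exp]; norm_num
    rw [hl]
    field_simp
    ring
  · unfold phiB Bfun Afun
    rw [if_neg (not_le.mpr h), ← exp_neg3_sq]
    field_simp
    ring

lemma bfun_eq (z : ℂ) : bfun z = ((phiB ‖z‖ : ℝ) : ℂ) * z := by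
  unfold bfun
  rcases eq_or_ne z 0 with rfl | hz
  · simp
  · rw [if_neg hz]
    have h0 : (‖z‖ : ℝ) ≠ 0 := norm_ne_zero_iff.mpr hz
    have h : (‖z‖ : ℂ) ≠ 0 := by exact_mod_cast h0
    unfold phiB
    push_cast
    field_simp

lemma phiB_abs_le {ε : ℝ} (hε : 0 < ε) {s : ℝ} (hs : 0 ≤ s) :
    |phiB s| ≤ (2 / ε + 14) * Real.exp (3 * ε) * s ^ ε := by
  rcases le_or_gt s (Real.exp (-3)) with h | h
  · rw [phiB_zero_of_le h, abs_zero]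
    positivity
  · have hr0 : (0:ℝ) < Real.exp (-3) := Real.exp_pos _
    have hs0 : 0 < s := hr0.trans h
    rw [phiB_eq h.le]
    have hexp1 : (1:ℝ) ≤ Real.exp (3 * ε) := by
      rw [show (1:ℝ) = Real.exp 0 by simp]
      exact Real.exp_le_exp.mpr (by positivity)
    have h1 : 4 * Real.exp (-3) / s ≤ 4 := by
      rw [div_le_iff₀ hs0]; nlinarith [h.le, hs0]
    have h1' : 0 ≤ 4 * Real.exp (-3) / s := by positivity
    have h2 : Real.exp (-3) ^ 2 / s ^ 2 ≤ 1 := by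
      rw [div_le_one (by positivity)]; nlinarith [h.le]
    have h2' : 0 ≤ Real.exp (-3) ^ 2 / s ^ 2 := by positivity
    have hlog2 : Real.log (s ^ 2) = 2 * Real.log s := by
      rw [Real.log_pow]; norm_num
    rcases le_or_gt 1 s with hs1 | hs1
    · -- s ≥ 1 : use log s ≤ s^ε/ε
      have hse : (1:ℝ) ≤ s ^ ε := Real.one_le_rpow hs1 hε.le
      have hlog0 : 0 ≤ Real.log s := Real.log_nonneg hs1
      have hlogle : ε * Real.log s ≤ s ^ ε - 1 := by
        have := Real.log_le_sub_one_of_pos (x := s ^ ε) (by positivity)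
        rwa [Real.log_rpow hs0] at this
      have key : 2 * Real.log s ≤ 2 / ε * s ^ ε := by
        rw [div_mul_eq_mul_div, le_div_iff₀ hε]
        nlinarith
      have hpos : 0 ≤ 2 / ε * s ^ ε := by positivity
      rw [abs_le]
      constructor
      · nlinarith [mul_nonneg hpos (sub_nonneg.mpr hexp1)]
      · nlinarith [mul_nonneg hpos (sub_nonneg.mpr hexp1)]
    · -- exp(-3) < s < 1 : |log s| ≤ 3 and s^ε ≥ exp(-3ε)
      have hlogub : Real.log s ≤ 0 := Real.log_nonpos hs0.le hs1.le
      have hloglb : -3 ≤ Real.log s := by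
        have := Real.log_le_log hr0 h.le
        rwa [Real.log_exp] at this
      have hrε : Real.exp (-3 * ε) ≤ s ^ ε := by
        rw [Real.exp_mul]
        exact Real.rpow_le_rpow hr0.le h.le hε.le
      have hkey : 1 ≤ Real.exp (3 * ε) * s ^ ε := by
        have h5 : Real.exp (3 * ε) * Real.exp (-3 * ε) = 1 := by
          rw [← Real.exp_add]; ring_nf; exact Real.exp_zero
        nlinarith [Real.exp_pos (3 * ε)]
      have hq : 0 ≤ 2 / ε * (Real.exp (3 * ε) * s ^ ε) := by positivity
      rw [abs_le]
      constructor
      · nlinarith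
      · nlinarith

lemma phiB_diff_core {t s : ℝ} (ht : Real.exp (-3) ≤ t) (hts : t ≤ s) :
    t * |phiB s - phiB t| ≤ 8 * (s - t) := by
  have hr0 : (0:ℝ) < Real.exp (-3) := Real.exp_pos _
  have ht0 : 0 < t := hr0.trans_le ht
  have hs0 : 0 < s := ht0.trans_le hts
  have hrs : Real.exp (-3) ≤ s := ht.trans hts
  rw [phiB_eq hrs, phiB_eq ht]
  set r := Real.exp (-3) with hr
  have hlogs : Real.log (s ^ 2) = 2 * Real.log s := by rw [Real.log_pow]; norm_num
  have hlogt : Real.log (t ^ 2) = 2 * Real.log t := by rw [Real.log_pow]; norm_num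
  have hL0 : 0 ≤ Real.log s - Real.log t := sub_nonneg.mpr (Real.log_le_log ht0 hts)
  have hL' : Real.log s - Real.log t ≤ (s - t) / t := by
    have h1 := Real.log_le_sub_one_of_pos (show (0:ℝ) < s / t by positivity)
    rw [Real.log_div hs0.ne' ht0.ne'] at h1
    have heq : (s - t) / t = s / t - 1 := by rw [sub_div, div_self ht0.ne']
    linarith
  have hst : 0 ≤ s - t := sub_nonneg.mpr hts
  have htr : 0 ≤ t - r := sub_nonneg.mpr ht
  have hE1a : 4 * r / s - 4 * r / t ≤ 0 := by
    have : 4 * r / s ≤ 4 * r / t := by gcongr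
    linarith
  have hE1b : -(4 * ((s - t) / t)) ≤ 4 * r / s - 4 * r / t := by
    have h9 : 4 * r / t - 4 * r / s ≤ 4 * ((s - t) / t) := by
      rw [← mul_div_assoc, div_sub_div _ _ ht0.ne' hs0.ne',
        div_le_div_iff₀ (by positivity) ht0]
      nlinarith [mul_nonneg (mul_nonneg ht0.le (sub_nonneg.mpr hts)) (sub_nonneg.mpr hrs)]
    linarith
  have hE2a : 0 ≤ r ^ 2 / t ^ 2 - r ^ 2 / s ^ 2 := by
    have : r ^ 2 / s ^ 2 ≤ r ^ 2 / t ^ 2 := by gcongr <;> positivity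
    linarith
  have hE2b : r ^ 2 / t ^ 2 - r ^ 2 / s ^ 2 ≤ 2 * ((s - t) / t) := by
    rw [← mul_div_assoc, div_sub_div _ _ (pow_ne_zero 2 ht0.ne') (pow_ne_zero 2 hs0.ne'),
      div_le_div_iff₀ (by positivity) ht0]
    have hA : 0 ≤ t * (s - t) * ((t - r) * ((t + r) * (s + t))) :=
      mul_nonneg (mul_nonneg ht0.le hst) (mul_nonneg htr (by positivity))
    have hB : 0 ≤ t * (s - t) * (t * ((s - t) * (2 * s + t))) :=
      mul_nonneg (mul_nonneg ht0.le hst)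
        (mul_nonneg ht0.le (mul_nonneg hst (by positivity)))
    nlinarith [hA, hB]
  have hq : 0 ≤ (s - t) / t := div_nonneg hst ht0.le
  have hDabs : |Real.log (s ^ 2) + 3 + 4 * r / s - r ^ 2 / s ^ 2
      - (Real.log (t ^ 2) + 3 + 4 * r / t - r ^ 2 / t ^ 2)| ≤ 8 * ((s - t) / t) := by
    rw [abs_le, hlogs, hlogt]
    constructor <;> nlinarith
  calc t * |Real.log (s ^ 2) + 3 + 4 * r / s - r ^ 2 / s ^ 2
      - (Real.log (t ^ 2) + 3 + 4 * r / t - r ^ 2 / t ^ 2)| ≤ t * (8 * ((s - t) / t)) :=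
        mul_le_mul_of_nonneg_left hDabs ht0.le
    _ = 8 * (s - t) := by field_simp

lemma phiB_diff_mul {t s : ℝ} (ht : 0 ≤ t) (hts : t ≤ s) :
    t * |phiB s - phiB t| ≤ 8 * (s - t) := by
  rcases le_or_gt s (Real.exp (-3)) with h | h
  · rw [phiB_zero_of_le h, phiB_zero_of_le (hts.trans h)]
    simp
    linarith
  · rcases le_or_gt (Real.exp (-3)) t with h' | h'
    · exact phiB_diff_core h' hts
    · rw [phiB_zero_of_le h'.le]
      have hc := phiB_diff_core (le_refl (Real.exp (-3))) h.le
      rw [phiB_zero_of_le le_rfl] at hc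
      have h0 : 0 ≤ |phiB s - 0| := abs_nonneg _
      nlinarith [mul_le_mul_of_nonneg_right h'.le h0]

lemma phiB_diff_mul' {ε : ℝ} (hε : 0 < ε) {t s : ℝ} (ht : 0 ≤ t) (hts : t ≤ s) :
    t * |phiB s - phiB t| ≤ 8 * Real.exp (3 * ε) * s ^ ε * (s - t) := by
  have hs : 0 ≤ s := ht.trans hts
  rcases le_or_gt s (Real.exp (-3)) with h | h
  · rw [phiB_zero_of_le h, phiB_zero_of_le (hts.trans h)]
    simp
    exact mul_nonneg (mul_nonneg (by positivity) (Real.rpow_nonneg hs ε))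
      (sub_nonneg.mpr hts)
  · have h1 := phiB_diff_mul ht hts
    have h2 : 1 ≤ Real.exp (3 * ε) * s ^ ε := by
      have hrε : Real.exp (-3 * ε) ≤ s ^ ε := by
        rw [Real.exp_mul]
        exact Real.rpow_le_rpow (Real.exp_pos _).le h.le hε.le
      have h5 : Real.exp (3 * ε) * Real.exp (-3 * ε) = 1 := by
        rw [← Real.exp_add]; ring_nf; exact Real.exp_zero
      nlinarith [Real.exp_pos (3 * ε)]
    have h3 : 0 ≤ s - t := sub_nonneg.mpr hts
    nlinarith [mul_nonneg (sub_nonneg.mpr h2) h3]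

lemma bfun_est {ε : ℝ} (hε : 0 < ε) {z w : ℂ} (hwz : ‖w‖ ≤ ‖z‖) :
    ‖bfun z - bfun w‖ ≤
      (2 / ε + 22) * Real.exp (3 * ε) * (‖z‖ ^ ε + ‖w‖ ^ ε) * ‖z - w‖ := by
  rw [bfun_eq z, bfun_eq w]
  have key : ((phiB ‖z‖ : ℝ) : ℂ) * z - ((phiB ‖w‖ : ℝ) : ℂ) * w
      = ((phiB ‖z‖ : ℝ) : ℂ) * (z - w) + (((phiB ‖z‖ - phiB ‖w‖ : ℝ)) : ℂ) * w := by
    push_cast; ring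
  rw [key]
  have h1 : ‖((phiB ‖z‖ : ℝ) : ℂ) * (z - w)‖ = |phiB ‖z‖| * ‖z - w‖ := by
    rw [norm_mul, Complex.norm_real]; rfl
  have h2 : ‖(((phiB ‖z‖ - phiB ‖w‖ : ℝ)) : ℂ) * w‖ = |phiB ‖z‖ - phiB ‖w‖| * ‖w‖ := by
    rw [norm_mul, Complex.norm_real]; rfl
  have hb1 : |phiB ‖z‖| ≤ (2 / ε + 14) * Real.exp (3 * ε) * ‖z‖ ^ ε :=
    phiB_abs_le hε (norm_nonneg z)
  have hb2 : ‖w‖ * |phiB ‖z‖ - phiB ‖w‖| ≤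
      8 * Real.exp (3 * ε) * ‖z‖ ^ ε * (‖z‖ - ‖w‖) :=
    phiB_diff_mul' hε (norm_nonneg w) hwz
  have hnn : ‖z‖ - ‖w‖ ≤ ‖z - w‖ := norm_sub_norm_le z w
  have htri := norm_add_le (((phiB ‖z‖ : ℝ) : ℂ) * (z - w))
    ((((phiB ‖z‖ - phiB ‖w‖ : ℝ)) : ℂ) * w)
  rw [h1, h2] at htri
  have hzw0 : 0 ≤ ‖z - w‖ := norm_nonneg _
  have hE : 0 < Real.exp (3 * ε) := Real.exp_pos _
  have hzε : 0 ≤ ‖z‖ ^ ε := Real.rpow_nonneg (norm_nonneg z) ε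
  have hwε : 0 ≤ ‖w‖ ^ ε := Real.rpow_nonneg (norm_nonneg w) ε
  have hc : 0 < 2 / ε + 22 := by positivity
  have hstep1 : |phiB ‖z‖| * ‖z - w‖ ≤
      (2 / ε + 14) * Real.exp (3 * ε) * ‖z‖ ^ ε * ‖z - w‖ :=
    mul_le_mul_of_nonneg_right hb1 hzw0
  have hstep2 : |phiB ‖z‖ - phiB ‖w‖| * ‖w‖ ≤
      8 * Real.exp (3 * ε) * ‖z‖ ^ ε * ‖z - w‖ := by
    have h8 : 0 ≤ 8 * Real.exp (3 * ε) * ‖z‖ ^ ε := by positivity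
    calc |phiB ‖z‖ - phiB ‖w‖| * ‖w‖ = ‖w‖ * |phiB ‖z‖ - phiB ‖w‖| := mul_comm _ _
      _ ≤ 8 * Real.exp (3 * ε) * ‖z‖ ^ ε * (‖z‖ - ‖w‖) := hb2
      _ ≤ 8 * Real.exp (3 * ε) * ‖z‖ ^ ε * ‖z - w‖ := mul_le_mul_of_nonneg_left hnn h8
  have hfin : 0 ≤ (2 / ε + 22) * Real.exp (3 * ε) * ‖w‖ ^ ε * ‖z - w‖ := by positivity
  nlinarith [htri]

/-- For every `ε > 0` there exists `C_ε > 0` such that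
`|b(z) − b(w)| ≤ C_ε (|z|^ε + |w|^ε) |z − w|` for all `z, w ∈ ℂ`. -/
theorem bfun_lipschitz_estimate :
    ∀ ε > (0 : ℝ), ∃ C > (0 : ℝ), ∀ z w : ℂ,
      ‖bfun z - bfun w‖ ≤ C * (‖z‖ ^ ε + ‖w‖ ^ ε) * ‖z - w‖ := by
  intro ε hε
  refine ⟨(2 / ε + 22) * Real.exp (3 * ε), by positivity, ?_⟩
  intro z w
  rcases le_total ‖w‖ ‖z‖ with h | h
  · exact bfun_est hε h
  · have h1 := bfun_est hε (z := w) (w := z) h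
    rw [norm_sub_rev] at h1
    have h2 : (2 / ε + 22) * Real.exp (3 * ε) * (‖w‖ ^ ε + ‖z‖ ^ ε) * ‖w - z‖
        = (2 / ε + 22) * Real.exp (3 * ε) * (‖z‖ ^ ε + ‖w‖ ^ ε) * ‖z - w‖ := by
      rw [norm_sub_rev]; ring
    linarith [h1, h2.ge]
end

section
/- The Young function A satisfies the Δ₂-condition: there exists a constant K > 0 such that A(2s) ≤ K A(s) for all s ≥ 0. -/
/-- The Young function `A` satisfies the `Δ₂`-condition: there exists `K > 0`
such that `A(2s) ≤ K A(s)` for all `s ≥ 0`. -/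
theorem Afun_delta2 : ∃ K > (0 : ℝ), ∀ t ≥ (0 : ℝ), Afun (2 * t) ≤ K * Afun t := by
  refine ⟨100, by norm_num, fun t ht => ?_⟩
  set E := Real.exp (-3) with hE
  have hE0 : 0 < E := Real.exp_pos _
  have hE6 : Real.exp (-6) = E ^ 2 := by
    rw [hE, sq, ← Real.exp_add]; norm_num
  by_cases h1 : 2 * t ≤ E
  · have ht1 : t ≤ E := by linarith
    rw [Afun, Afun, if_pos h1, if_pos ht1]
    rcases eq_or_lt_of_le ht with h0 | h0
    · simp [← h0]
    · have hlog : Real.log ((2*t)^2) = Real.log 4 + Real.log (t^2) := by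
        have h42 : (2*t)^2 = 4 * t^2 := by ring
        rw [h42, Real.log_mul (by norm_num) (by positivity)]
      have hlt : Real.log (t^2) ≤ 0 := by
        apply Real.log_nonpos (by positivity)
        nlinarith [Real.exp_lt_exp.mpr (show (-3:ℝ) < 0 by norm_num), Real.exp_zero]
      have h4 : (0:ℝ) ≤ Real.log 4 := Real.log_nonneg (by norm_num)
      rw [hlog]
      nlinarith [sq_nonneg t, mul_nonneg (sq_nonneg t) h4]
  · push_neg at h1
    have ht0 : 0 < t := by linarith
    by_cases h2 : t ≤ E
    · rw [Afun, Afun, if_neg (not_le.mpr h1), if_pos h2, hE6]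
      have hlog : Real.log t ≤ -3 := by
        calc Real.log t ≤ Real.log E := Real.log_le_log ht0 h2
        _ = -3 := Real.log_exp _
      have hl2 : Real.log (t^2) = 2 * Real.log t := by
        rw [sq, Real.log_mul ht0.ne' ht0.ne']; ring
      rw [hl2]
      nlinarith [sq_nonneg t, sq_nonneg (t - E),
        mul_le_mul_of_nonneg_left hlog (sq_nonneg t)]
    · push_neg at h2
      rw [Afun, Afun, if_neg (not_le.mpr h1), if_neg (not_le.mpr h2), hE6]
      nlinarith [sq_nonneg t, mul_pos hE0 ht0, sq_nonneg (t - E)]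
end

section
/- Let N ≥ 2, 0 < s < 1, ω ∈ ℝ. Assume the fractional logarithmic Sobolev inequality. Then every u ∈ H^s(ℝᴺ), u ≠ 0, with I_ω(u) = 0 satisfies ‖u‖_{L²}² ≥ (sΓ(N/2)/Γ(N/(2s))) π^{N/2} e^{ω+N}. Consequently d(ω) ≥ ½ (sΓ(N/2)/Γ(N/(2s))) π^{N/2} e^{ω+N} > 0. -/
/-!
With `α = π^{s/2}` the right side of the logarithmic Sobolev inequality is exactly `G u`, and on
the Nehari manifold `G u = ∫ |u|² Log |u|² - ω ‖u‖²`. The entropy terms cancel and what remains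
is `(N + (N/2) Log π + Log K + ω) ‖u‖² ≤ ‖u‖² Log ‖u‖²`, a lower bound on `Log ‖u‖²`
(here `K = s Γ(N/2) / Γ(N/(2s))`).
-/

open MeasureTheory

section LogSobolev

variable {E F : Type*} [MeasurableSpace E] [NormedAddCommGroup F]

theorem integral_mul_log_div_const {μ : Measure E} {g : E → ℝ} (hg : Integrable g μ)
    (hg_log : Integrable (fun x => g x * Real.log (g x)) μ) {M : ℝ} (hM : M ≠ 0) :
    ∫ x, g x * Real.log (g x / M) ∂μ =
      ∫ x, g x * Real.log (g x) ∂μ - (∫ x, g x ∂μ) * Real.log M := by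
  have hpt : ∀ x, g x * Real.log (g x / M) = g x * Real.log (g x) - g x * Real.log M := by
    intro x
    rcases eq_or_ne (g x) 0 with h0 | h0
    · simp [h0]
    · rw [Real.log_div h0 hM, mul_sub]
  simp_rw [hpt]
  rw [integral_sub hg_log (hg.mul_const _), integral_mul_const]

theorem integral_sub_const_of_not_isFiniteMeasure {μ : Measure E} (hμ : ¬ IsFiniteMeasure μ)
    {g : E → ℝ} (hg : Integrable g μ) {c : ℝ} (hc : c ≠ 0) : ∫ x, (g x - c) ∂μ = 0 := by
  refine integral_undef fun h => ?_
  have : Integrable (fun _ => c) μ := by convert hg.sub h using 1; ext x; simp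
  exact (integrable_const_iff.mp this).elim hc hμ

/-- In the paper `C = Log (s Γ(n/2) / Γ(n/(2s)))` and `G f = ‖(−Δ)^{s/2} f‖²`. -/
def LogSobolevIneq (μ : Measure E) (n s C : ℝ) (G : (E → F) → ℝ) : Prop :=
  ∀ (f : E → F) (α : ℝ), 0 < α → Integrable (fun x => ‖f x‖ ^ 2) μ →
    (∫ x, ‖f x‖ ^ 2 * Real.log (‖f x‖ ^ 2 / ∫ y, ‖f y‖ ^ 2 ∂μ) ∂μ) +
        (n + n / s * Real.log α + C) * ∫ x, ‖f x‖ ^ 2 ∂μ ≤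
      α ^ 2 / Real.pi ^ s * G f

namespace LogSobolevIneq

variable {μ : Measure E} {n s C : ℝ} {G : (E → F) → ℝ} {f : E → F}

theorem pos (hLS : LogSobolevIneq μ n s C G) (hns : 0 < n / s)
    (hf : Integrable (fun x => ‖f x‖ ^ 2) μ) (hM : 0 < ∫ x, ‖f x‖ ^ 2 ∂μ) : 0 < G f := by
  by_contra! hG
  set M := ∫ x, ‖f x‖ ^ 2 ∂μ
  set A := ∫ x, ‖f x‖ ^ 2 * Real.log (‖f x‖ ^ 2 / M) ∂μ
  -- For `n / s * Log α = T` the left side of the inequality is `M`, while the right is `≤ 0`.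
  set T := 1 - A / M - n - C
  have h := hLS f (Real.exp (T / (n / s))) (Real.exp_pos _) hf
  rw [Real.log_exp, mul_div_cancel₀ _ hns.ne'] at h
  have hRHS : Real.exp (T / (n / s)) ^ 2 / Real.pi ^ s * G f ≤ 0 :=
    mul_nonpos_of_nonneg_of_nonpos (by positivity) hG
  have hAM : A / M * M = A := div_mul_cancel₀ A hM.ne'
  nlinarith

theorem le_at_pi_rpow_half (hLS : LogSobolevIneq μ n s C G) (hs : s ≠ 0)
    (hf : Integrable (fun x => ‖f x‖ ^ 2) μ)
    (hf_log : Integrable (fun x => ‖f x‖ ^ 2 * Real.log (‖f x‖ ^ 2)) μ)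
    (hM : 0 < ∫ x, ‖f x‖ ^ 2 ∂μ) :
    (∫ x, ‖f x‖ ^ 2 * Real.log (‖f x‖ ^ 2) ∂μ) +
        (n + n / 2 * Real.log Real.pi + C - Real.log (∫ x, ‖f x‖ ^ 2 ∂μ)) *
          ∫ x, ‖f x‖ ^ 2 ∂μ ≤ G f := by
  have h := hLS f (Real.pi ^ (s / 2)) (by positivity) hf
  have hα : (Real.pi ^ (s / 2)) ^ 2 = Real.pi ^ s := by
    rw [← Real.rpow_natCast, ← Real.rpow_mul Real.pi_pos.le]; norm_num
  rw [integral_mul_log_div_const hf hf_log hM.ne', hα, div_self (by positivity), one_mul,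
    Real.log_rpow Real.pi_pos] at h
  have hcoef : n / s * (s / 2 * Real.log Real.pi) = n / 2 * Real.log Real.pi := by field_simp
  rw [hcoef] at h
  exact le_of_eq_of_le (by ring) h

theorem mass_lower_bound (hLS : LogSobolevIneq μ n s C G) (hs : s ≠ 0) (ω : ℝ)
    (hf : Integrable (fun x => ‖f x‖ ^ 2) μ)
    (hf_log : Integrable (fun x => ‖f x‖ ^ 2 * Real.log (‖f x‖ ^ 2)) μ)
    (hM : 0 < ∫ x, ‖f x‖ ^ 2 ∂μ)
    (hI : G f + ω * (∫ x, ‖f x‖ ^ 2 ∂μ) - ∫ x, ‖f x‖ ^ 2 * Real.log (‖f x‖ ^ 2) ∂μ ≤ 0) :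
    Real.pi ^ (n / 2) * Real.exp (n + C + ω) ≤ ∫ x, ‖f x‖ ^ 2 ∂μ := by
  set M := ∫ x, ‖f x‖ ^ 2 ∂μ
  have h := hLS.le_at_pi_rpow_half hs hf hf_log hM
  have hlog : n / 2 * Real.log Real.pi + n + C + ω ≤ Real.log M := by
    by_contra! hlt
    nlinarith
  calc Real.pi ^ (n / 2) * Real.exp (n + C + ω)
      = Real.exp (n / 2 * Real.log Real.pi + n + C + ω) := by
        rw [Real.rpow_def_of_pos Real.pi_pos, ← Real.exp_add]; ring_nf
    _ ≤ Real.exp (Real.log M) := Real.exp_le_exp.mpr hlog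
    _ = M := Real.exp_log hM

theorem mass_lower_bound_of_not_isFiniteMeasure (hLS : LogSobolevIneq μ n s C G)
    (hμ : ¬ IsFiniteMeasure μ) (hn : 0 < n) (hs : 0 < s) (ω : ℝ)
    (hf : Integrable (fun x => ‖f x‖ ^ 2) μ)
    (hf_log : Integrable (fun x => ‖f x‖ ^ 2 * Real.log (‖f x‖ ^ 2)) μ)
    (hM : 0 < ∫ x, ‖f x‖ ^ 2 ∂μ)
    (hI : G f + ω * ∫ x, (‖f x‖ ^ 2 - ∫ y, ‖f y‖ ^ 2 * Real.log (‖f y‖ ^ 2) ∂μ) ∂μ = 0) :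
    Real.pi ^ (n / 2) * Real.exp (n + C + ω) ≤ ∫ x, ‖f x‖ ^ 2 ∂μ := by
  by_cases hc : ∫ x, ‖f x‖ ^ 2 * Real.log (‖f x‖ ^ 2) ∂μ = 0
  · rw [hc] at hI
    simp only [sub_zero] at hI
    exact hLS.mass_lower_bound hs.ne' ω hf hf_log hM (by linarith)
  -- Otherwise the integrand in `hI` is `‖f x‖ ^ 2` minus a nonzero constant, which is not
  -- integrable on an infinite measure space; so the integral is `0` and `hI` reads `G f = 0`.
  · rw [integral_sub_const_of_not_isFiniteMeasure hμ hf hc, mul_zero, add_zero] at hI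
    exact absurd hI (hLS.pos (div_pos hn hs) hf hM).ne'

end LogSobolevIneq

end LogSobolev

theorem not_isFiniteMeasure_volume_euclideanSpace {ι : Type*} [Fintype ι] [Nonempty ι] :
    ¬ IsFiniteMeasure (volume : Measure (EuclideanSpace ℝ ι)) := fun _ =>
  measure_ne_top (volume : Measure (EuclideanSpace ℝ ι)) Set.univ
    (measure_univ_of_isAddLeftInvariant _)

theorem dOmega_lower_bound_general {N : ℕ} (s ω : ℝ) (hN : 2 ≤ N) (hs0 : 0 < s)
    (G : (EuclideanSpace ℝ (Fin N) → ℂ) → ℝ)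
    (hLS : ∀ (f : EuclideanSpace ℝ (Fin N) → ℂ) (α : ℝ), 0 < α →
      Integrable (fun x => ‖f x‖ ^ 2) →
      (∫ x, ‖f x‖ ^ 2 * Real.log (‖f x‖ ^ 2 / ∫ y, ‖f y‖ ^ 2)) +
          ((N : ℝ) + ((N : ℝ) / s) * Real.log α +
            Real.log (s * Real.Gamma ((N : ℝ) / 2) / Real.Gamma ((N : ℝ) / (2 * s)))) *
            ∫ x, ‖f x‖ ^ 2 ≤
        α ^ 2 / Real.pi ^ s * G f) :
    (∀ u : EuclideanSpace ℝ (Fin N) → ℂ,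
        Integrable (fun x => ‖u x‖ ^ 2) →
        Integrable (fun x => ‖u x‖ ^ 2 * Real.log (‖u x‖ ^ 2)) →
        0 < ∫ x, ‖u x‖ ^ 2 →
        G u + ω * ∫ x, ‖u x‖ ^ 2 - ∫ x, ‖u x‖ ^ 2 * Real.log (‖u x‖ ^ 2) = 0 →
        (s * Real.Gamma ((N : ℝ) / 2) / Real.Gamma ((N : ℝ) / (2 * s))) *
            Real.pi ^ ((N : ℝ) / 2) * Real.exp (ω + N) ≤ ∫ x, ‖u x‖ ^ 2) ∧
      ENNReal.ofReal ((1 / 2) *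
          ((s * Real.Gamma ((N : ℝ) / 2) / Real.Gamma ((N : ℝ) / (2 * s))) *
            Real.pi ^ ((N : ℝ) / 2) * Real.exp (ω + N))) ≤
        (1 / 2) * sInf {m : ENNReal | ∃ u : EuclideanSpace ℝ (Fin N) → ℂ,
          Integrable (fun x => ‖u x‖ ^ 2) ∧
          Integrable (fun x => ‖u x‖ ^ 2 * Real.log (‖u x‖ ^ 2)) ∧
          0 < ∫ x, ‖u x‖ ^ 2 ∧
          G u + ω * ∫ x, ‖u x‖ ^ 2 - ∫ x, ‖u x‖ ^ 2 * Real.log (‖u x‖ ^ 2) = 0 ∧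
          m = ENNReal.ofReal (∫ x, ‖u x‖ ^ 2)} := by
  set K := s * Real.Gamma ((N : ℝ) / 2) / Real.Gamma ((N : ℝ) / (2 * s))
  have hNpos : (0 : ℝ) < N := by norm_cast; omega
  have hK : 0 < K := by
    have := Real.Gamma_pos_of_pos (half_pos hNpos)
    have := Real.Gamma_pos_of_pos (div_pos hNpos (mul_pos two_pos hs0))
    positivity
  have hLS' : LogSobolevIneq volume (N : ℝ) s (Real.log K) G := hLS
  have : Nonempty (Fin N) := Fin.pos_iff_nonempty.mp (by omega)
  have hconst : K * Real.pi ^ ((N : ℝ) / 2) * Real.exp (ω + N) =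
      Real.pi ^ ((N : ℝ) / 2) * Real.exp (N + Real.log K + ω) := by
    simp only [Real.exp_add, Real.exp_log hK]; ring
  have nehari_bound := fun (u : EuclideanSpace ℝ (Fin N) → ℂ) hu hu_log hM hI =>
    hconst.trans_le <| hLS'.mass_lower_bound_of_not_isFiniteMeasure (f := u)
      not_isFiniteMeasure_volume_euclideanSpace hNpos hs0 ω hu hu_log hM hI
  refine ⟨nehari_bound, ?_⟩
  rw [ENNReal.ofReal_mul (by norm_num)]
  refine mul_le_mul' (by rw [ENNReal.ofReal_div_of_pos two_pos]; simp) ?_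
  exact le_sInf fun m ⟨u, hu, hu_log, hM, hI, hm⟩ =>
      hm ▸ ENNReal.ofReal_le_ofReal (nehari_bound u hu hu_log hM hI)

/-- `d(ω) ≥ ½ (sΓ(N/2)/Γ(N/(2s))) π^{N/2} e^{ω+N} > 0`, assuming the fractional logarithmic
Sobolev inequality. Here `G f` denotes `‖(−Δ)^{s/2}f‖²_{L²}`, and `d(ω)` is
`½ inf {‖u‖²_{L²} : u ≠ 0, I_ω(u) = 0}` (computed in `ℝ≥0∞`, so that it is `∞` when the
Nehari manifold is empty). -/
theorem dOmega_lower_bound {N : ℕ} (s ω : ℝ) (hN : 2 ≤ N) (hs0 : 0 < s) (hs1 : s < 1)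
    (G : (EuclideanSpace ℝ (Fin N) → ℂ) → ℝ)
    (hLS : ∀ (f : EuclideanSpace ℝ (Fin N) → ℂ) (α : ℝ), 0 < α →
      Integrable (fun x => ‖f x‖ ^ 2) →
      (∫ x, ‖f x‖ ^ 2 * Real.log (‖f x‖ ^ 2 / ∫ y, ‖f y‖ ^ 2)) +
          ((N : ℝ) + ((N : ℝ) / s) * Real.log α +
            Real.log (s * Real.Gamma ((N : ℝ) / 2) / Real.Gamma ((N : ℝ) / (2 * s)))) *
            ∫ x, ‖f x‖ ^ 2 ≤
        α ^ 2 / Real.pi ^ s * G f) :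
    (∀ u : EuclideanSpace ℝ (Fin N) → ℂ,
        Integrable (fun x => ‖u x‖ ^ 2) →
        Integrable (fun x => ‖u x‖ ^ 2 * Real.log (‖u x‖ ^ 2)) →
        0 < ∫ x, ‖u x‖ ^ 2 →
        G u + ω * ∫ x, ‖u x‖ ^ 2 - ∫ x, ‖u x‖ ^ 2 * Real.log (‖u x‖ ^ 2) = 0 →
        (s * Real.Gamma ((N : ℝ) / 2) / Real.Gamma ((N : ℝ) / (2 * s))) *
            Real.pi ^ ((N : ℝ) / 2) * Real.exp (ω + N) ≤ ∫ x, ‖u x‖ ^ 2) ∧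
      ENNReal.ofReal ((1 / 2) *
          ((s * Real.Gamma ((N : ℝ) / 2) / Real.Gamma ((N : ℝ) / (2 * s))) *
            Real.pi ^ ((N : ℝ) / 2) * Real.exp (ω + N))) ≤
        (1 / 2) * sInf {m : ENNReal | ∃ u : EuclideanSpace ℝ (Fin N) → ℂ,
          Integrable (fun x => ‖u x‖ ^ 2) ∧
          Integrable (fun x => ‖u x‖ ^ 2 * Real.log (‖u x‖ ^ 2)) ∧
          0 < ∫ x, ‖u x‖ ^ 2 ∧
          G u + ω * ∫ x, ‖u x‖ ^ 2 - ∫ x, ‖u x‖ ^ 2 * Real.log (‖u x‖ ^ 2) = 0 ∧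
          m = ENNReal.ofReal (∫ x, ‖u x‖ ^ 2)} :=
  dOmega_lower_bound_general s ω hN hs0 G hLS
end
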